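/- In the canonical μIS5-model, the relation ≡_c is backward confluent with respect to ⊆: if Γ ≡_c Δ and Δ ⊆ Σ for μIS5-theories Γ, Δ, Σ, then there exists a μIS5-theory Φ with Γ ⊆ Φ and Φ ≡_c Σ. -/

import Mathlib

/-- Constructive μ-formulas. -/
inductive Fml : Type where
  | prop : ℕ → Fml
  | var : ℕ → Fml
  | bot : Fml
  | top : Fml
  | neg : Fml → Fml
  | and : Fml → Fml → Fml
  | or : Fml → Fml → Fml
  | imp : Fml → Fml → Fml
  | box : Fml → Fml
  | dia : Fml → Fml
  | mu : ℕ → Fml → Fml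
  | nu : ℕ → Fml → Fml

mutual
  /-- `X` occurs only positively in `φ`. -/
  inductive PosIn : ℕ → Fml → Prop where
    | prop {x p} : PosIn x (.prop p)
    | bot {x} : PosIn x .bot
    | top {x} : PosIn x .top
    | var {x} : PosIn x (.var x)
    | varNe {x y} : x ≠ y → PosIn x (.var y)
    | neg {x φ} : NegIn x φ → PosIn x (.neg φ)
    | and {x φ ψ} : PosIn x φ → PosIn x ψ → PosIn x (.and φ ψ)
    | or {x φ ψ} : PosIn x φ → PosIn x ψ → PosIn x (.or φ ψ)
    | imp {x φ ψ} : NegIn x φ → PosIn x ψ → PosIn x (.imp φ ψ)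
    | box {x φ} : PosIn x φ → PosIn x (.box φ)
    | dia {x φ} : PosIn x φ → PosIn x (.dia φ)
    | muSelf {x φ} : PosIn x (.mu x φ)
    | mu {x y φ} : x ≠ y → PosIn x φ → PosIn x (.mu y φ)
    | nuSelf {x φ} : PosIn x (.nu x φ)
    | nu {x y φ} : x ≠ y → PosIn x φ → PosIn x (.nu y φ)
  /-- `X` occurs only negatively in `φ`. -/
  inductive NegIn : ℕ → Fml → Prop where
    | prop {x p} : NegIn x (.prop p)
    | bot {x} : NegIn x .bot
    | top {x} : NegIn x .top
    | varNe {x y} : x ≠ y → NegIn x (.var y)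
    | neg {x φ} : PosIn x φ → NegIn x (.neg φ)
    | and {x φ ψ} : NegIn x φ → NegIn x ψ → NegIn x (.and φ ψ)
    | or {x φ ψ} : NegIn x φ → NegIn x ψ → NegIn x (.or φ ψ)
    | imp {x φ ψ} : PosIn x φ → NegIn x ψ → NegIn x (.imp φ ψ)
    | box {x φ} : NegIn x φ → NegIn x (.box φ)
    | dia {x φ} : NegIn x φ → NegIn x (.dia φ)
    | muSelf {x φ} : NegIn x (.mu x φ)
    | mu {x y φ} : x ≠ y → NegIn x φ → NegIn x (.mu y φ)
    | nuSelf {x φ} : NegIn x (.nu x φ)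
    | nu {x y φ} : x ≠ y → NegIn x φ → NegIn x (.nu y φ)
end

/-- Bi-relational CK-models of Mendler and de Paiva. -/
structure CKModel (W : Type) where
  fall : Set W
  le : W → W → Prop
  R : W → W → Prop
  V : ℕ → Set W
  le_refl : ∀ w, le w w
  le_trans : ∀ {w v u}, le w v → le v u → le w u
  persist : ∀ p {w v}, le w v → w ∈ V p → v ∈ V p
  fall_V : ∀ p, fall ⊆ V p
  fall_le : ∀ {w v}, w ∈ fall → le w v → v ∈ fall
  fall_R : ∀ {w v}, w ∈ fall → R w v → v ∈ fall

/-- Bi-relational semantics with an environment `ρ` for the variables.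
Fixed points are interpreted via Knaster–Tarski. -/
def sem {W : Type} (M : CKModel W) : (ℕ → Set W) → Fml → Set W
  | ρ, .prop p => M.V p
  | ρ, .var x => ρ x
  | _, .bot => M.fall
  | _, .top => Set.univ
  | ρ, .neg φ => {w | ∀ v, M.le w v → v ∉ sem M ρ φ}
  | ρ, .and φ ψ => sem M ρ φ ∩ sem M ρ ψ
  | ρ, .or φ ψ => sem M ρ φ ∪ sem M ρ ψ
  | ρ, .imp φ ψ => {w | ∀ v, M.le w v → v ∈ sem M ρ φ → v ∈ sem M ρ ψ}
  | ρ, .box φ => {w | ∀ v u, M.le w v → M.R v u → u ∈ sem M ρ φ}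
  | ρ, .dia φ => {w | ∀ v, M.le w v → ∃ u, M.R v u ∧ u ∈ sem M ρ φ}
  | ρ, .mu x φ => ⋂₀ {A | sem M (Function.update ρ x A) φ ⊆ A}
  | ρ, .nu x φ => ⋃₀ {A | A ⊆ sem M (Function.update ρ x A) φ}

/-- IS5-models: CK-models with no fallible worlds, whose modal relation is an
equivalence relation that is forward and backward confluent with `⪯`. -/
structure IS5Model (W : Type) extends CKModel W where
  fall_empty : fall = ∅
  R_equiv : Equivalence R
  forward : ∀ {w v w'}, R w v → le w w' → ∃ v', le v v' ∧ R w' v'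
  backward : ∀ {w v v'}, R w v → le v v' → ∃ w', le w w' ∧ R w' v'

/-- Ordinal-indexed approximants of a least fixed point. -/
noncomputable def muApprox {W : Type} (Γ : Set W → Set W) (α : Ordinal) : Set W :=
  Ordinal.limitRecOn α ∅ (fun _ A => Γ A) (fun o _ ih => ⋃ β : Set.Iio o, ih β.1 β.2)

/-- Ordinal-indexed approximants of a greatest fixed point. -/
noncomputable def nuApprox {W : Type} (Γ : Set W → Set W) (α : Ordinal) : Set W :=
  Ordinal.limitRecOn α Set.univ (fun _ A => Γ A) (fun o _ ih => ⋂ β : Set.Iio o, ih β.1 β.2)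

/-- `φ` is a modal formula: it contains no fixed-point operators. -/
def NoFix : Fml → Prop
  | .mu _ _ => False
  | .nu _ _ => False
  | .neg φ => NoFix φ
  | .box φ => NoFix φ
  | .dia φ => NoFix φ
  | .and φ ψ => NoFix φ ∧ NoFix ψ
  | .or φ ψ => NoFix φ ∧ NoFix ψ
  | .imp φ ψ => NoFix φ ∧ NoFix ψ
  | _ => True

/-- Number of free occurrences of the variable `x` in a formula. -/
def varCount (x : ℕ) : Fml → ℕ
  | .var y => if y = x then 1 else 0
  | .neg φ => varCount x φ
  | .box φ => varCount x φ
  | .dia φ => varCount x φ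
  | .and φ ψ => varCount x φ + varCount x ψ
  | .or φ ψ => varCount x φ + varCount x ψ
  | .imp φ ψ => varCount x φ + varCount x ψ
  | .mu y φ => if y = x then 0 else varCount x φ
  | .nu y φ => if y = x then 0 else varCount x φ
  | _ => 0

/-- A formula is closed iff it has no free variables. -/
def Closed (φ : Fml) : Prop := ∀ x, varCount x φ = 0

/-- Well-formedness: every fixed-point operator binds a positive variable. -/
def WF : Fml → Prop
  | .mu x φ => PosIn x φ ∧ WF φ
  | .nu x φ => PosIn x φ ∧ WF φ
  | .neg φ => WF φ
  | .box φ => WF φ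
  | .dia φ => WF φ
  | .and φ ψ => WF φ ∧ WF ψ
  | .or φ ψ => WF φ ∧ WF ψ
  | .imp φ ψ => WF φ ∧ WF ψ
  | _ => True

/-- Substitution of the formula `σ` for the free occurrences of the variable `x`. -/
def subst (x : ℕ) (σ : Fml) : Fml → Fml
  | .var y => if y = x then σ else .var y
  | .prop p => .prop p
  | .bot => .bot
  | .top => .top
  | .neg φ => .neg (subst x σ φ)
  | .and φ ψ => .and (subst x σ φ) (subst x σ ψ)
  | .or φ ψ => .or (subst x σ φ) (subst x σ ψ)
  | .imp φ ψ => .imp (subst x σ φ) (subst x σ ψ)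
  | .box φ => .box (subst x σ φ)
  | .dia φ => .dia (subst x σ φ)
  | .mu y φ => if y = x then .mu y φ else .mu y (subst x σ φ)
  | .nu y φ => if y = x then .nu y φ else .nu y (subst x σ φ)

def Fml.iff (φ ψ : Fml) : Fml := .and (.imp φ ψ) (.imp ψ φ)

/-- The axioms of μIS5: intuitionistic axioms, the modal axioms
K□, K◇, FS, DP, N, T, 4, 5, and the fixed-point axioms νFP and μFP. -/
inductive Ax : Fml → Prop where
  | k1 (φ ψ) : Ax (.imp φ (.imp ψ φ))
  | k2 (φ ψ χ) : Ax (.imp (.imp φ (.imp ψ χ)) (.imp (.imp φ ψ) (.imp φ χ)))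
  | andI (φ ψ) : Ax (.imp φ (.imp ψ (.and φ ψ)))
  | andE1 (φ ψ) : Ax (.imp (.and φ ψ) φ)
  | andE2 (φ ψ) : Ax (.imp (.and φ ψ) ψ)
  | orI1 (φ ψ) : Ax (.imp φ (.or φ ψ))
  | orI2 (φ ψ) : Ax (.imp ψ (.or φ ψ))
  | orE (φ ψ χ) : Ax (.imp (.imp φ χ) (.imp (.imp ψ χ) (.imp (.or φ ψ) χ)))
  | botE (φ) : Ax (.imp .bot φ)
  | topI : Ax .top
  | negI (φ) : Ax (.imp (.imp φ .bot) (.neg φ))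
  | negE (φ) : Ax (.imp (.neg φ) (.imp φ .bot))
  | kBox (φ ψ) : Ax (.imp (.box (.imp φ ψ)) (.imp (.box φ) (.box ψ)))
  | kDia (φ ψ) : Ax (.imp (.box (.imp φ ψ)) (.imp (.dia φ) (.dia ψ)))
  | fs (φ ψ) : Ax (.imp (.imp (.dia φ) (.box ψ)) (.box (.imp φ ψ)))
  | dp (φ ψ) : Ax (.imp (.dia (.or φ ψ)) (.or (.dia φ) (.dia ψ)))
  | n : Ax (.neg (.dia .bot))
  | t1 (φ) : Ax (.imp (.box φ) φ)
  | t2 (φ) : Ax (.imp φ (.dia φ))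
  | four1 (φ) : Ax (.imp (.box φ) (.box (.box φ)))
  | four2 (φ) : Ax (.imp (.dia (.dia φ)) (.dia φ))
  | five1 (φ) : Ax (.imp (.dia φ) (.box (.dia φ)))
  | five2 (φ) : Ax (.imp (.dia (.box φ)) (.box φ))
  | nuFP (x φ) : PosIn x φ → Ax (.imp (.nu x φ) (subst x (.nu x φ) φ))
  | muFP (x φ) : PosIn x φ → Ax (.imp (subst x (.mu x φ) φ) (.mu x φ))

/-- Provability in μIS5: closure of the axioms under modus ponens,
necessitation, and the two fixed-point induction rules. -/
inductive Prov : Fml → Prop where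
  | ax {φ} : Ax φ → Prov φ
  | mp {φ ψ} : Prov (.imp φ ψ) → Prov φ → Prov ψ
  | nec {φ} : Prov φ → Prov (.box φ)
  | nuInd {x φ ψ} : PosIn x φ → Prov (.imp ψ (subst x ψ φ)) → Prov (.imp ψ (.nu x φ))
  | muInd {x φ ψ} : PosIn x φ → Prov (.imp (subst x ψ φ) ψ) → Prov (.imp (.mu x φ) ψ)

/-- μIS5-theories: contain all axioms, closed under modus ponens,
consistent, and with the disjunction property. -/
structure IsTheory (Γ : Set Fml) : Prop where
  ax_mem : ∀ φ, Ax φ → φ ∈ Γ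
  mp_closed : ∀ φ ψ, Fml.imp φ ψ ∈ Γ → φ ∈ Γ → ψ ∈ Γ
  bot_not_mem : Fml.bot ∉ Γ
  disj : ∀ φ ψ, Fml.or φ ψ ∈ Γ → φ ∈ Γ ∨ ψ ∈ Γ

def diaSet (Γ : Set Fml) : Set Fml := {φ | Fml.dia φ ∈ Γ}
def boxSet (Γ : Set Fml) : Set Fml := {φ | Fml.box φ ∈ Γ}

/-- The canonical modal relation on μIS5-theories. -/
def equivC (Γ Δ : Set Fml) : Prop := Δ ⊆ diaSet Γ ∧ boxSet Γ ⊆ Δ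

/-! Extend `Γ ∪ ◇Sg` by Zorn's lemma to a set `Φ` that is maximal among the sets `S` with
`boxDer S ⊆ Sg`, i.e. such that `χ ∈ Sg` whenever `S` derives `□χ`. The starting set has this
property because FS turns `◇σ → □χ` into `□(σ → χ)`, and `□`-formulas of `Γ` lie in `Δ ⊆ Sg`.
Maximality makes `Φ` deductively closed, consistent because `⊥ ∉ Sg`, and prime thanks to T, 5
and DP inside `Sg`. Then `Sg ⊆ diaSet Φ` holds by construction and `boxSet Φ ⊆ Sg` by the
defining property. -/

/-- Derivability from hypotheses by modus ponens alone; necessitation is left out so that the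
deduction theorem holds. -/
inductive Der (S : Set Fml) : Fml → Prop where
  | hyp {φ} : φ ∈ S → Der S φ
  | ax {φ} : Ax φ → Der S φ
  | mp {φ ψ} : Der S (.imp φ ψ) → Der S φ → Der S ψ

namespace Der

variable {S T : Set Fml} {φ ψ χ : Fml}

theorem mono (h : Der S φ) (hST : S ⊆ T) : Der T φ := by
  induction h with
  | hyp h => exact hyp (hST h)
  | ax h => exact ax h
  | mp _ _ ih₁ ih₂ => exact mp ih₁ ih₂

theorem imp_self (S : Set Fml) (φ : Fml) : Der S (.imp φ φ) :=
  ((ax (Ax.k2 φ (.imp φ φ) φ)).mp (ax (Ax.k1 φ (.imp φ φ)))).mp (ax (Ax.k1 φ φ))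

theorem imp_of_insert (h : Der (insert φ S) ψ) : Der S (.imp φ ψ) := by
  induction h with
  | hyp h =>
    rcases h with rfl | h
    · exact imp_self S _
    · exact (ax (Ax.k1 _ φ)).mp (hyp h)
  | ax h => exact (ax (Ax.k1 _ φ)).mp (ax h)
  | mp _ _ ih₁ ih₂ => exact ((ax (Ax.k2 φ _ _)).mp ih₁).mp ih₂

theorem imp_trans (h₁ : Der S (.imp φ ψ)) (h₂ : Der S (.imp ψ χ)) : Der S (.imp φ χ) :=
  ((ax (Ax.k2 φ ψ χ)).mp ((ax (Ax.k1 _ φ)).mp h₂)).mp h₁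

theorem exists_mem_of_sUnion {c : Set (Set Fml)} (hc : DirectedOn (· ⊆ ·) c)
    (hne : c.Nonempty) (h : Der (⋃₀ c) φ) : ∃ S ∈ c, Der S φ := by
  induction h with
  | hyp h =>
    obtain ⟨S, hS, hφ⟩ := h
    exact ⟨S, hS, hyp hφ⟩
  | ax h => exact ⟨hne.some, hne.some_mem, ax h⟩
  | mp _ _ ih₁ ih₂ =>
    obtain ⟨S₁, hS₁, h₁⟩ := ih₁
    obtain ⟨S₂, hS₂, h₂⟩ := ih₂
    obtain ⟨S, hS, hS₁S, hS₂S⟩ := hc S₁ hS₁ S₂ hS₂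
    exact ⟨S, hS, mp (h₁.mono hS₁S) (h₂.mono hS₂S)⟩

end Der

namespace IsTheory

variable {Γ : Set Fml} {φ ψ : Fml}

theorem mem_of_der (hΓ : IsTheory Γ) (h : Der Γ φ) : φ ∈ Γ := by
  induction h with
  | hyp h => exact h
  | ax h => exact hΓ.ax_mem _ h
  | mp _ _ ih₁ ih₂ => exact hΓ.mp_closed _ _ ih₁ ih₂

theorem mem_of_ax_imp (hΓ : IsTheory Γ) (hax : Ax (.imp φ ψ)) (h : φ ∈ Γ) : ψ ∈ Γ :=
  hΓ.mp_closed _ _ (hΓ.ax_mem _ hax) h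

theorem mem_of_dia_box_mem (hΓ : IsTheory Γ) (h : Fml.dia (.box φ) ∈ Γ) : φ ∈ Γ :=
  hΓ.mem_of_ax_imp (Ax.t1 φ) (hΓ.mem_of_ax_imp (Ax.five2 φ) h)

end IsTheory

def boxDer (S : Set Fml) : Set Fml := {χ | Der S (.box χ)}

section BoxDer

variable {S T Φ Sg : Set Fml}

theorem boxDer_eq_boxSet (hS : IsTheory S) : boxDer S = boxSet S :=
  Set.ext fun _ => ⟨hS.mem_of_der, fun h => Der.hyp h⟩

theorem boxDer_mono (h : S ⊆ T) : boxDer S ⊆ boxDer T :=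
  fun _ hχ => Der.mono hχ h

theorem boxDer_sUnion_subset {c : Set (Set Fml)} (hc : DirectedOn (· ⊆ ·) c)
    (hne : c.Nonempty) (h : ∀ S ∈ c, boxDer S ⊆ Sg) : boxDer (⋃₀ c) ⊆ Sg := fun _ hχ =>
  let ⟨S, hS, hχS⟩ := Der.exists_mem_of_sUnion hc hne hχ
  h S hS hχS

theorem boxDer_insert_dia_subset (hSg : IsTheory Sg) (hS : boxDer S ⊆ Sg) {σ : Fml}
    (hσ : σ ∈ Sg) : boxDer (insert (.dia σ) S) ⊆ Sg := fun χ hχ =>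
  have hσχ : Fml.imp σ χ ∈ Sg := hS ((Der.ax (Ax.fs σ χ)).mp hχ.imp_of_insert)
  hSg.mp_closed _ _ hσχ hσ

theorem boxDer_union_dia_image_subset (hSg : IsTheory Sg) (hS : boxDer S ⊆ Sg) :
    boxDer (S ∪ Fml.dia '' Sg) ⊆ Sg := by
  classical
  have hfin : ∀ F : Finset Fml, ↑F ⊆ Sg → boxDer (S ∪ Fml.dia '' F) ⊆ Sg := by
    intro F
    induction F using Finset.induction_on with
    | empty => simpa using hS
    | insert σ F _ ih =>
      intro hF
      rw [Finset.coe_insert, Set.insert_subset_iff] at hF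
      rw [Finset.coe_insert, Set.image_insert_eq, Set.union_insert]
      exact boxDer_insert_dia_subset hSg (ih hF.2) hF.1
  let c : Set (Set Fml) := {T | ∃ F : Finset Fml, ↑F ⊆ Sg ∧ T = S ∪ Fml.dia '' F}
  have hc : DirectedOn (· ⊆ ·) c := by
    rintro _ ⟨F₁, hF₁, rfl⟩ _ ⟨F₂, hF₂, rfl⟩
    refine ⟨_, ⟨F₁ ∪ F₂, by simpa using And.intro hF₁ hF₂, rfl⟩, ?_, ?_⟩ <;>
      gcongr <;> simp
  have hsub : S ∪ Fml.dia '' Sg ⊆ ⋃₀ c := by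
    rintro _ (hφ | ⟨σ, hσ, rfl⟩)
    · exact ⟨_, ⟨∅, by simp, rfl⟩, Or.inl hφ⟩
    · exact ⟨_, ⟨{σ}, by simpa using hσ, rfl⟩, Or.inr ⟨σ, by simp, rfl⟩⟩
  refine (boxDer_mono hsub).trans (boxDer_sUnion_subset hc ⟨S, ∅, by simp, by simp⟩ ?_)
  rintro _ ⟨F, hF, rfl⟩
  exact hfin F hF

variable (hSg : IsTheory Sg) (hΦ : Maximal (fun S => boxDer S ⊆ Sg) Φ)
include hΦ

theorem mem_of_der_of_maximal {φ : Fml} (h : Der Φ φ) : φ ∈ Φ := by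
  refine hΦ.2 (fun χ hχ => hΦ.1 ?_) (Set.subset_insert φ Φ) (Set.mem_insert φ Φ)
  exact hχ.imp_of_insert.mp h

theorem exists_der_imp_box_not_mem_of_maximal {φ : Fml} (hφ : φ ∉ Φ) :
    ∃ χ ∉ Sg, Der Φ (.imp φ (.box χ)) := by
  by_contra! h
  refine hφ (hΦ.2 (fun χ hχ => ?_) (Set.subset_insert φ Φ) (Set.mem_insert φ Φ))
  exact of_not_not fun hχSg => h χ hχSg hχ.imp_of_insert

include hSg

/-- Otherwise `Φ` derives `□χ₁ ∨ □χ₂` with `χ₁, χ₂ ∉ Sg`, hence `□◇(□χ₁ ∨ □χ₂)` by T and 5;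
then DP splits `◇(□χ₁ ∨ □χ₂) ∈ Sg`, and 5 and T bring one of the `χᵢ` into `Sg`. -/
theorem mem_or_mem_of_maximal {φ ψ : Fml} (h : Fml.or φ ψ ∈ Φ) : φ ∈ Φ ∨ ψ ∈ Φ := by
  by_contra! hφψ
  obtain ⟨χ₁, hχ₁, hφ⟩ := exists_der_imp_box_not_mem_of_maximal hΦ hφψ.1
  obtain ⟨χ₂, hχ₂, hψ⟩ := exists_der_imp_box_not_mem_of_maximal hΦ hφψ.2
  set C : Fml := .or (.box χ₁) (.box χ₂)
  have hC : Der Φ C := (((Der.ax (Ax.orE φ ψ C)).mp (hφ.imp_trans (.ax (Ax.orI1 _ _)))).mp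
    (hψ.imp_trans (.ax (Ax.orI2 _ _)))).mp (.hyp h)
  have hdiaC : Fml.dia C ∈ Sg := hΦ.1 ((Der.ax (Ax.five1 C)).mp ((Der.ax (Ax.t2 C)).mp hC))
  rcases hSg.disj _ _ (hSg.mem_of_ax_imp (Ax.dp _ _) hdiaC) with h₁ | h₂
  · exact hχ₁ (hSg.mem_of_dia_box_mem h₁)
  · exact hχ₂ (hSg.mem_of_dia_box_mem h₂)

theorem isTheory_of_maximal : IsTheory Φ where
  ax_mem _ h := mem_of_der_of_maximal hΦ (.ax h)
  mp_closed _ _ h₁ h₂ := mem_of_der_of_maximal hΦ ((Der.hyp h₁).mp (.hyp h₂))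
  bot_not_mem h := hSg.bot_not_mem (hΦ.1 ((Der.ax (Ax.botE _)).mp (.hyp h)))
  disj _ _ := mem_or_mem_of_maximal hSg hΦ

end BoxDer

/-- `≡_c` is backward confluent with respect to inclusion of
μIS5-theories. -/
theorem equivC_backward_confluent (Γ Δ Sg : Set Fml)
    (hΓ : IsTheory Γ) (hΔ : IsTheory Δ) (hSg : IsTheory Sg)
    (h1 : equivC Γ Δ) (h2 : Δ ⊆ Sg) :
    ∃ Φ : Set Fml, IsTheory Φ ∧ Γ ⊆ Φ ∧ equivC Φ Sg := by
  have hΓSg : boxDer Γ ⊆ Sg := by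
    rw [boxDer_eq_boxSet hΓ]
    exact h1.2.trans h2
  obtain ⟨Φ, hΦ₀, hΦ⟩ := zorn_subset_nonempty {S | Γ ∪ Fml.dia '' Sg ⊆ S ∧ boxDer S ⊆ Sg}
    (fun c hc hchain ⟨S, hS⟩ => ⟨⋃₀ c,
      ⟨(hc hS).1.trans (Set.subset_sUnion_of_mem hS),
        boxDer_sUnion_subset hchain.directedOn ⟨S, hS⟩ fun T hT => (hc hT).2⟩,
      fun _ => Set.subset_sUnion_of_mem⟩)
    _ ⟨subset_rfl, boxDer_union_dia_image_subset hSg hΓSg⟩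
  have hΦmax : Maximal (fun S => boxDer S ⊆ Sg) Φ :=
    ⟨hΦ.1.2, fun S hS hΦS => hΦ.2 ⟨hΦ.1.1.trans hΦS, hS⟩ hΦS⟩
  have hΦth := isTheory_of_maximal hSg hΦmax
  exact ⟨Φ, hΦth, Set.subset_union_left.trans hΦ₀, fun σ hσ => hΦ₀ (Or.inr ⟨σ, hσ, rfl⟩),
    boxDer_eq_boxSet hΦth ▸ hΦ.1.2⟩
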